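/- (Jackson estimate, single tree, r = 1.) Let 𝒯 satisfy the geometric decay condition with parameter 0 < ρ < 1, let 1 ≤ p < ∞, α > 0, 1/τ = α + 1/p, and suppose f = Σ_{Ω∈𝒯} ψ_Ω with N_τ(f,𝒯) < ∞. Let f_M = Σ_{m=1}^M ψ_{Ω_{k_m}} be the M-term approximation obtained by keeping the M wavelets with largest L_p norms. Then ‖f − f_M‖_p ≤ C(p, α, ρ) M^{−α} N_τ(f,𝒯), where C does not depend on the dimension n. -/

import Mathlib

open MeasureTheory
open scoped ENNReal

/-- The mean `E⃗_Ω` of `f` over `Ω`. -/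
noncomputable def cellMean {n d : ℕ} (f : (Fin n → ℝ) → EuclideanSpace ℝ (Fin d))
    (Ω : Set (Fin n → ℝ)) : EuclideanSpace ℝ (Fin d) := ⨍ x in Ω, f x

/-- The `τ`-th power of the averaged-modulus Besov semi-norm
`|f|_{B̃_τ^{α,1}(𝒯)} = (Σ_{Ω∈𝒯} (|Ω|^{-α} w₁(f,Ω)_τ)^τ)^{1/τ}`, where
`w₁(f,Ω)_τ^τ = ∫_Ω ‖f - E⃗_Ω‖_{ℓ₂}^τ`; node `(l,j)` is the `j`-th cell at level `l`. -/
noncomputable def besovTildeTau {n d : ℕ} (α τ : ℝ)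
    (f : (Fin n → ℝ) → EuclideanSpace ℝ (Fin d))
    (cells : ℕ → ℕ → Set (Fin n → ℝ)) : ℝ≥0∞ :=
  ∑' (l : ℕ) (j : ℕ), volume (cells l j) ^ (-(α * τ)) *
    ∫⁻ x in cells l j, (‖f x - cellMean f (cells l j)‖₊ : ℝ≥0∞) ^ τ

/-- The `τ`-th power of the tree sparsity `N_τ(f,𝒯) = (Σ_{Ω'≠Ω₀} ‖ψ_{Ω'}‖_p^τ)^{1/τ}`, where
`‖ψ_{Ω'}‖_p^τ = ‖E⃗_{Ω'} - E⃗_Ω‖_{ℓ₂}^τ |Ω'|^{τ/p}` (`Ω` the parent of `Ω'`); the cells at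
level `l+1` with index `j` have parent `(l, j/2)`. -/
noncomputable def sparsityTau {n d : ℕ} (τ p : ℝ)
    (f : (Fin n → ℝ) → EuclideanSpace ℝ (Fin d))
    (cells : ℕ → ℕ → Set (Fin n → ℝ)) : ℝ≥0∞ :=
  ∑' (l : ℕ) (j : ℕ),
    (‖cellMean f (cells (l + 1) j) - cellMean f (cells l (j / 2))‖₊ : ℝ≥0∞) ^ τ *
      volume (cells (l + 1) j) ^ (τ / p)

/-- The piecewise-constant wavelet of the node `(l, j)`:
`ψ_{Ω₀} = 1_{Ω₀} E⃗_{Ω₀}` at the root, and `ψ_{Ω'} = 1_{Ω'}(E⃗_{Ω'} - E⃗_Ω)` for a child `Ω'`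
of `Ω`. -/
noncomputable def treeWavelet {n d : ℕ} (f : (Fin n → ℝ) → EuclideanSpace ℝ (Fin d))
    (cells : ℕ → ℕ → Set (Fin n → ℝ)) :
    ℕ → ℕ → (Fin n → ℝ) → EuclideanSpace ℝ (Fin d)
  | 0, j => (cells 0 j).indicator fun _ => cellMean f (cells 0 j)
  | (l + 1), j => (cells (l + 1) j).indicator
      fun _ => cellMean f (cells (l + 1) j) - cellMean f (cells l (j / 2))


/-- The `L_p` norm of the wavelet of the non-root node at level `q.1 + 1`, index `q.2`:
`‖ψ_{Ω'}‖_p = ‖E⃗_{Ω'} - E⃗_Ω‖_{ℓ₂} |Ω'|^{1/p}`. -/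
noncomputable def waveletNormP {n d : ℕ} (p : ℝ)
    (f : (Fin n → ℝ) → EuclideanSpace ℝ (Fin d))
    (cells : ℕ → ℕ → Set (Fin n → ℝ)) (q : ℕ × ℕ) : ℝ≥0∞ :=
  (‖cellMean f (cells (q.1 + 1) q.2) - cellMean f (cells q.1 (q.2 / 2))‖₊ : ℝ≥0∞) *
    volume (cells (q.1 + 1) q.2) ^ (1 / p)

open Filter Finset

/-!
Stechkin's bound: since `e` lists the wavelets by non-increasing `L_p` norm,
`(k + 1) ‖ψ_{e k}‖_p^τ ≤ N_τ(f)^τ`. A block of wavelets of `L_p` norm at most `ε` has `L_p` norm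
at most `(#block)^{1/p} (1 - ρ^{1/p})⁻¹ ε`: the cells of the block containing a point `x` form a
chain, and by the Nikolskii identity `‖ψ_Ω‖_∞ = |Ω|^{-1/p} ‖ψ_Ω‖_p` and geometric decay each of
them contributes at most `ρ^{(l' - l)/p} ε |Ω'|^{-1/p}` at `x`, where `Ω'` is the deepest one at
level `l'`. Hence `|Σ ψ(x)|^p ≤ ((1 - ρ^{1/p})⁻¹ ε)^p / |Ω'|`, which integrates to at most
`#block · ((1 - ρ^{1/p})⁻¹ ε)^p`. Cutting the tail `f - f_M` into the dyadic blocks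
`[M 2^s, M 2^{s+1})` gives the bound `(1 - ρ^{1/p})⁻¹ N_τ(f) (M 2^s)^{1/p - 1/τ}` for block `s`,
a geometric series in `2^{-α}` summing to `C M^{-α} N_τ(f)`; Fatou's lemma passes from partial
sums to the tail. No constant involves the dimension.
-/

section Tree

variable {X : Type*} {cells : ℕ → ℕ → Set X}

/-- `cells l j` is the `j`-th cell at level `l`; its children are the cells `2j` and `2j+1` at
level `l + 1`, so the parent of `cells (l + 1) j` is `cells l (j / 2)`. -/
structure IsBinaryPartitionTree (cells : ℕ → ℕ → Set X) : Prop where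
  eq_empty_of_ne_zero : ∀ j, j ≠ 0 → cells 0 j = ∅
  union_children : ∀ l j, cells (l + 1) (2 * j) ∪ cells (l + 1) (2 * j + 1) = cells l j
  disjoint_children : ∀ l j, Disjoint (cells (l + 1) (2 * j)) (cells (l + 1) (2 * j + 1))

namespace IsBinaryPartitionTree

theorem succ_subset (hT : IsBinaryPartitionTree cells) (l j : ℕ) :
    cells (l + 1) j ⊆ cells l (j / 2) := by
  rw [← hT.union_children l (j / 2)]
  rcases Nat.even_or_odd' j with ⟨i, rfl | rfl⟩
  · simp
  · simp [show (2 * i + 1) / 2 = i by omega]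

theorem add_subset (hT : IsBinaryPartitionTree cells) (l m j : ℕ) :
    cells (l + m) j ⊆ cells l (j / 2 ^ m) := by
  induction m generalizing j with
  | zero => simp
  | succ m ih =>
    rw [pow_succ', ← Nat.div_div_eq_div_mul]
    exact (hT.succ_subset (l + m) j).trans (ih (j / 2))

theorem subset_root (hT : IsBinaryPartitionTree cells) (l j : ℕ) : cells l j ⊆ cells 0 0 := by
  have h := hT.add_subset 0 l j
  rw [zero_add] at h
  obtain h0 | hj := eq_or_ne (j / 2 ^ l) 0
  · rwa [h0] at h
  · rw [hT.eq_empty_of_ne_zero _ hj, Set.subset_empty_iff] at h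
    simp [h]

theorem disjoint (hT : IsBinaryPartitionTree cells) (l : ℕ) {j j' : ℕ} (hjj' : j ≠ j') :
    Disjoint (cells l j) (cells l j') := by
  induction l generalizing j j' with
  | zero =>
    obtain rfl | hj := eq_or_ne j 0
    · simp [hT.eq_empty_of_ne_zero j' hjj'.symm]
    · simp [hT.eq_empty_of_ne_zero j hj]
  | succ l ih =>
    obtain hpar | hpar := eq_or_ne (j / 2) (j' / 2)
    · rcases Nat.even_or_odd' j with ⟨i, rfl | rfl⟩ <;>
        rcases Nat.even_or_odd' j' with ⟨i', rfl | rfl⟩ <;> try omega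
      · obtain rfl : i = i' := by omega
        exact hT.disjoint_children l i
      · obtain rfl : i = i' := by omega
        exact (hT.disjoint_children l i).symm
    · exact (ih hpar).mono (hT.succ_subset l j) (hT.succ_subset l j')

theorem eq_of_mem (hT : IsBinaryPartitionTree cells) {l j j' : ℕ} {x : X}
    (hx : x ∈ cells l j) (hx' : x ∈ cells l j') : j = j' := by
  by_contra hjj'
  exact (hT.disjoint l hjj').ne_of_mem hx hx' rfl

theorem sum_pow_sub_fst_le (hT : IsBinaryPartitionTree cells) {T : Finset (ℕ × ℕ)} {x : X}
    (hx : ∀ q ∈ T, x ∈ cells q.1 q.2) {L : ℕ} (hL : ∀ q ∈ T, q.1 ≤ L) (r : ℝ≥0∞) :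
    ∑ q ∈ T, r ^ (L - q.1) ≤ (1 - r)⁻¹ := by
  -- the nodes of `T` lie on distinct levels, since their cells share the point `x`
  have hinj : Set.InjOn (fun q : ℕ × ℕ => L - q.1) T := by
    intro a ha b hb hab
    have hlev : a.1 = b.1 := by have := hL a ha; have := hL b hb; simp only at hab; omega
    have hb' : x ∈ cells a.1 b.2 := hlev ▸ hx b hb
    exact Prod.ext hlev (hT.eq_of_mem (hx a ha) hb')
  rw [← sum_image hinj, ← ENNReal.tsum_geometric]
  exact ENNReal.sum_le_tsum _

end IsBinaryPartitionTree

variable [MeasurableSpace X] {μ : Measure X} {ρ : ℝ≥0∞}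

theorem measure_add_le_pow_mul
    (hdecay : ∀ l j, μ (cells (l + 1) j) ≤ ρ * μ (cells l (j / 2))) (l m j : ℕ) :
    μ (cells (l + m) j) ≤ ρ ^ m * μ (cells l (j / 2 ^ m)) := by
  induction m generalizing j with
  | zero => simp
  | succ m ih =>
    calc μ (cells (l + m + 1) j) ≤ ρ * μ (cells (l + m) (j / 2)) := hdecay (l + m) j
      _ ≤ ρ * (ρ ^ m * μ (cells l (j / 2 / 2 ^ m))) := by gcongr; exact ih (j / 2)
      _ = ρ ^ (m + 1) * μ (cells l (j / 2 ^ (m + 1))) := by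
        rw [Nat.div_div_eq_div_mul, ← pow_succ', ← mul_assoc, ← pow_succ']

namespace IsBinaryPartitionTree

theorem measure_le_pow_mul_of_mem (hT : IsBinaryPartitionTree cells)
    (hdecay : ∀ l j, μ (cells (l + 1) j) ≤ ρ * μ (cells l (j / 2)))
    {l l' j j' : ℕ} (hll' : l ≤ l') {x : X} (hx : x ∈ cells l j) (hx' : x ∈ cells l' j') :
    μ (cells l' j') ≤ ρ ^ (l' - l) * μ (cells l j) := by
  obtain ⟨m, rfl⟩ := Nat.exists_eq_add_of_le hll'
  rw [Nat.add_sub_cancel_left]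
  have hanc : x ∈ cells l (j' / 2 ^ m) := hT.add_subset l m j' hx'
  rw [← hT.eq_of_mem hanc hx]
  exact measure_add_le_pow_mul hdecay l m j'

end IsBinaryPartitionTree
end Tree

section Block

variable {X E : Type*} [MeasurableSpace X] [NormedAddCommGroup E] {μ : Measure X}
  {cells : ℕ → ℕ → Set X} {ρ : ℝ≥0∞} {p : ℝ} {c : ℕ × ℕ → E} {Λ : Finset (ℕ × ℕ)} {ε : ℝ≥0∞}

theorem enorm_sum_indicator_mul_le (hT : IsBinaryPartitionTree cells)
    (hdecay : ∀ l j, μ (cells (l + 1) j) ≤ ρ * μ (cells l (j / 2))) (hp : 0 < p)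
    (hε : ∀ q ∈ Λ, ‖c q‖ₑ * μ (cells q.1 q.2) ^ (1 / p) ≤ ε) {x : X} {q' : ℕ × ℕ}
    (hxq' : x ∈ cells q'.1 q'.2) (hmax : ∀ q ∈ Λ, x ∈ cells q.1 q.2 → q.1 ≤ q'.1) :
    ‖∑ q ∈ Λ, (cells q.1 q.2).indicator (fun _ => c q) x‖ₑ * μ (cells q'.1 q'.2) ^ (1 / p) ≤
      (1 - ρ ^ (1 / p))⁻¹ * ε := by
  classical
  set T := Λ.filter fun q => x ∈ cells q.1 q.2
  have hsum : ‖∑ q ∈ Λ, (cells q.1 q.2).indicator (fun _ => c q) x‖ₑ ≤ ∑ q ∈ T, ‖c q‖ₑ := by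
    refine (enorm_sum_le Λ fun q => (cells q.1 q.2).indicator (fun _ => c q) x).trans_eq ?_
    rw [sum_filter]
    refine sum_congr rfl fun q _ => ?_
    by_cases hxq : x ∈ cells q.1 q.2 <;> simp [hxq]
  have hterm : ∀ q ∈ T, ‖c q‖ₑ * μ (cells q'.1 q'.2) ^ (1 / p) ≤
      (ρ ^ (1 / p)) ^ (q'.1 - q.1) * ε := by
    intro q hq
    rw [mem_filter] at hq
    have hμ := hT.measure_le_pow_mul_of_mem hdecay (hmax q hq.1 hq.2) hq.2 hxq'
    calc ‖c q‖ₑ * μ (cells q'.1 q'.2) ^ (1 / p)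
        ≤ ‖c q‖ₑ * (ρ ^ (q'.1 - q.1) * μ (cells q.1 q.2)) ^ (1 / p) := by gcongr
      _ = (ρ ^ (1 / p)) ^ (q'.1 - q.1) * (‖c q‖ₑ * μ (cells q.1 q.2) ^ (1 / p)) := by
        rw [ENNReal.mul_rpow_of_nonneg _ _ (by positivity), ← ENNReal.rpow_natCast_mul,
          mul_comm (_ : ℝ), ENNReal.rpow_mul_natCast]
        ring
      _ ≤ (ρ ^ (1 / p)) ^ (q'.1 - q.1) * ε := by gcongr; exact hε q hq.1
  have hgeom : ∑ q ∈ T, (ρ ^ (1 / p)) ^ (q'.1 - q.1) ≤ (1 - ρ ^ (1 / p))⁻¹ :=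
    hT.sum_pow_sub_fst_le (fun q hq => (mem_filter.1 hq).2)
      (fun q hq => hmax q (mem_filter.1 hq).1 (mem_filter.1 hq).2) _
  calc ‖∑ q ∈ Λ, (cells q.1 q.2).indicator (fun _ => c q) x‖ₑ * μ (cells q'.1 q'.2) ^ (1 / p)
      ≤ ∑ q ∈ T, ‖c q‖ₑ * μ (cells q'.1 q'.2) ^ (1 / p) := by
        rw [← sum_mul]; gcongr
    _ ≤ ∑ q ∈ T, (ρ ^ (1 / p)) ^ (q'.1 - q.1) * ε := sum_le_sum hterm
    _ ≤ (1 - ρ ^ (1 / p))⁻¹ * ε := by rw [← sum_mul]; gcongr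

theorem enorm_sum_indicator_rpow_le (hT : IsBinaryPartitionTree cells)
    (hfin : ∀ l j, μ (cells l j) ≠ ∞)
    (hdecay : ∀ l j, μ (cells (l + 1) j) ≤ ρ * μ (cells l (j / 2))) (hp : 0 < p)
    (hε : ∀ q ∈ Λ, ‖c q‖ₑ * μ (cells q.1 q.2) ^ (1 / p) ≤ ε) {x : X}
    (hx : ∀ q ∈ Λ, x ∈ cells q.1 q.2 → μ (cells q.1 q.2) ≠ 0) :
    ‖∑ q ∈ Λ, (cells q.1 q.2).indicator (fun _ => c q) x‖ₑ ^ p ≤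
      ((1 - ρ ^ (1 / p))⁻¹ * ε) ^ p *
        ∑ q ∈ Λ, (cells q.1 q.2).indicator (fun _ => (μ (cells q.1 q.2))⁻¹) x := by
  classical
  set T := Λ.filter fun q => x ∈ cells q.1 q.2
  obtain hT0 | hTne := T.eq_empty_or_nonempty
  · rw [filter_eq_empty_iff] at hT0
    rw [sum_eq_zero fun q hq => Set.indicator_of_notMem (hT0 hq) _, enorm_zero,
      ENNReal.zero_rpow_of_pos hp]
    exact zero_le
  obtain ⟨q', hq'T, hmax⟩ := T.exists_max_image Prod.fst hTne
  rw [mem_filter] at hq'T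
  have hbound := enorm_sum_indicator_mul_le hT hdecay hp hε hq'T.2
    fun q hq hxq => hmax q (mem_filter.2 ⟨hq, hxq⟩)
  have hbound_p := ENNReal.rpow_le_rpow hbound hp.le
  rw [ENNReal.mul_rpow_of_nonneg _ _ hp.le, ← ENNReal.rpow_mul, one_div_mul_cancel hp.ne',
    ENNReal.rpow_one] at hbound_p
  calc ‖∑ q ∈ Λ, (cells q.1 q.2).indicator (fun _ => c q) x‖ₑ ^ p
      ≤ ((1 - ρ ^ (1 / p))⁻¹ * ε) ^ p * (μ (cells q'.1 q'.2))⁻¹ := by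
        rw [← div_eq_mul_inv]
        exact (ENNReal.le_div_iff_mul_le (.inl (hx q' hq'T.1 hq'T.2)) (.inl (hfin _ _))).2
          hbound_p
    _ ≤ _ := by
        gcongr
        rw [← Set.indicator_of_mem hq'T.2 fun _ => (μ (cells q'.1 q'.2))⁻¹]
        exact single_le_sum (f := fun q => (cells q.1 q.2).indicator
          (fun _ => (μ (cells q.1 q.2))⁻¹) x) (fun _ _ => zero_le) hq'T.1

theorem eLpNorm_sum_indicator_le (hT : IsBinaryPartitionTree cells)
    (hmeas : ∀ l j, MeasurableSet (cells l j)) (hfin : ∀ l j, μ (cells l j) ≠ ∞)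
    (hdecay : ∀ l j, μ (cells (l + 1) j) ≤ ρ * μ (cells l (j / 2))) (hp : 0 < p)
    (hε : ∀ q ∈ Λ, ‖c q‖ₑ * μ (cells q.1 q.2) ^ (1 / p) ≤ ε) :
    eLpNorm (fun x => ∑ q ∈ Λ, (cells q.1 q.2).indicator (fun _ => c q) x)
        (ENNReal.ofReal p) μ ≤ (#Λ : ℝ≥0∞) ^ (1 / p) * ((1 - ρ ^ (1 / p))⁻¹ * ε) := by
  set B := (1 - ρ ^ (1 / p))⁻¹ * ε
  have hae : ∀ᵐ x ∂μ, ∀ q ∈ Λ, x ∈ cells q.1 q.2 → μ (cells q.1 q.2) ≠ 0 := by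
    refine (Finset.eventually_all Λ).2 fun q _ => ?_
    obtain h0 | h0 := eq_or_ne (μ (cells q.1 q.2)) 0
    · filter_upwards [measure_eq_zero_iff_ae_notMem.1 h0] with x hx hx' using absurd hx' hx
    · exact Eventually.of_forall fun _ _ => h0
  have hint : ∫⁻ x, ‖∑ q ∈ Λ, (cells q.1 q.2).indicator (fun _ => c q) x‖ₑ ^ p ∂μ ≤
      B ^ p * #Λ := by
    calc _ ≤ ∫⁻ x, B ^ p *
          ∑ q ∈ Λ, (cells q.1 q.2).indicator (fun _ => (μ (cells q.1 q.2))⁻¹) x ∂μ :=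
          lintegral_mono_ae <| hae.mono fun x hx =>
            enorm_sum_indicator_rpow_le hT hfin hdecay hp hε hx
      _ = B ^ p * ∑ q ∈ Λ, (μ (cells q.1 q.2))⁻¹ * μ (cells q.1 q.2) := by
          rw [lintegral_const_mul _ (Finset.measurable_sum _
              fun q _ => measurable_const.indicator (hmeas _ _)),
            lintegral_finsetSum _ fun q _ => measurable_const.indicator (hmeas _ _)]
          simp only [lintegral_indicator_const (hmeas _ _)]
      _ ≤ B ^ p * #Λ := by
          gcongr
          simpa using sum_le_card_nsmul Λ _ 1 fun q _ => ENNReal.inv_mul_le_one _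
  rw [eLpNorm_eq_lintegral_rpow_enorm_toReal (by simpa using hp) ENNReal.ofReal_ne_top,
    ENNReal.toReal_ofReal hp.le]
  calc _ ≤ (B ^ p * #Λ) ^ (1 / p) := by gcongr
    _ = (#Λ : ℝ≥0∞) ^ (1 / p) * B := by
      rw [ENNReal.mul_rpow_of_nonneg _ _ (by positivity), ← ENNReal.rpow_mul,
        mul_one_div_cancel hp.ne', ENNReal.rpow_one, mul_comm]

end Block

section Dyadic

variable {X E : Type*} [MeasurableSpace X] [NormedAddCommGroup E] {μ : Measure X} {p : ℝ≥0∞}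
  {g : ℕ → X → E}

theorem eLpNorm_sum_Ico_mul_two_pow_le (hg : ∀ k, AEStronglyMeasurable (g k) μ) (hp : 1 ≤ p)
    (M S : ℕ) :
    eLpNorm (∑ k ∈ Ico M (M * 2 ^ S), g k) p μ ≤
      ∑ s ∈ range S, eLpNorm (∑ k ∈ Ico (M * 2 ^ s) (M * 2 ^ (s + 1)), g k) p μ := by
  induction S with
  | zero => simp
  | succ S ih =>
    rw [← sum_Ico_consecutive g (Nat.le_mul_of_pos_right M (by positivity))
      (Nat.mul_le_mul_left M (Nat.pow_le_pow_right two_pos S.le_succ)), sum_range_succ]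
    exact (eLpNorm_add_le (Finset.aestronglyMeasurable_sum _ fun k _ => hg k)
      (Finset.aestronglyMeasurable_sum _ fun k _ => hg k) hp).trans (add_le_add_left ih _)

theorem eLpNorm_sub_sum_range_le_tsum (hg : ∀ k, AEStronglyMeasurable (g k) μ) (hp : 1 ≤ p)
    {F : X → E} (hF : ∀ᵐ x ∂μ, HasSum (fun k => g k x) (F x)) {M : ℕ} (hM : 0 < M) :
    eLpNorm (F - ∑ k ∈ range M, g k) p μ ≤
      ∑' s, eLpNorm (∑ k ∈ Ico (M * 2 ^ s) (M * 2 ^ (s + 1)), g k) p μ := by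
  refine Lp.eLpNorm_le_of_ae_tendsto (u := atTop)
    (Eventually.of_forall fun S => (eLpNorm_sum_Ico_mul_two_pow_le hg hp M S).trans
      (ENNReal.sum_le_tsum _))
    (fun S => Finset.aestronglyMeasurable_sum _ fun k _ => hg k) ?_
  have hK : Tendsto (fun S : ℕ => M * 2 ^ S) atTop atTop :=
    (tendsto_pow_atTop_atTop_of_one_lt one_lt_two).const_mul_atTop' hM
  filter_upwards [hF] with x hx
  simp only [Finset.sum_apply, Pi.sub_apply,
    sum_Ico_eq_sub _ (Nat.le_mul_of_pos_right M (Nat.two_pow_pos _))]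
  exact (hx.tendsto_sum_nat.comp hK).sub_const _

end Dyadic

theorem add_one_mul_le_tsum_of_antitone {a : ℕ → ℝ≥0∞} (ha : Antitone a) (k : ℕ) :
    (k + 1 : ℝ≥0∞) * a k ≤ ∑' i, a i :=
  calc (k + 1 : ℝ≥0∞) * a k = ∑ _i ∈ range (k + 1), a k := by simp
    _ ≤ ∑ i ∈ range (k + 1), a i := sum_le_sum fun i hi => ha (Nat.lt_succ_iff.1 (mem_range.1 hi))
    _ ≤ ∑' i, a i := ENNReal.sum_le_tsum _

theorem HasSum.comp_succ_fst {E : Type*} [AddCommGroup E] [TopologicalSpace E]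
    [IsTopologicalAddGroup E] {g : ℕ × ℕ → E} {a : E} (h : HasSum g a)
    (hg : ∀ j, j ≠ 0 → g (0, j) = 0) :
    HasSum (fun q : ℕ × ℕ => g (q.1 + 1, q.2)) (a - g (0, 0)) := by
  classical
  have hshift : Function.Injective fun q : ℕ × ℕ => (q.1 + 1, q.2) := fun a b hab => by
    simpa [Prod.ext_iff] using hab
  have hzero : ∀ q ∉ Set.range fun q : ℕ × ℕ => (q.1 + 1, q.2),
      g q - (if q = (0, 0) then g (0, 0) else 0) = 0 := by
    rintro ⟨_ | l, j⟩ hq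
    · obtain rfl | hj := eq_or_ne j 0
      · simp
      · simp [hg j hj, hj]
    · exact absurd ⟨(l, j), rfl⟩ hq
  convert (hshift.hasSum_iff hzero).2 (h.sub (hasSum_ite_eq (0, 0) (g (0, 0)))) using 1
  funext q
  simp

section Wavelet

variable {n d : ℕ} {f : (Fin n → ℝ) → EuclideanSpace ℝ (Fin d)}
  {cells : ℕ → ℕ → Set (Fin n → ℝ)} {p τ : ℝ}

noncomputable def waveletCoeff (f : (Fin n → ℝ) → EuclideanSpace ℝ (Fin d))
    (cells : ℕ → ℕ → Set (Fin n → ℝ)) : ℕ → ℕ → EuclideanSpace ℝ (Fin d)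
  | 0, j => cellMean f (cells 0 j)
  | l + 1, j => cellMean f (cells (l + 1) j) - cellMean f (cells l (j / 2))

theorem treeWavelet_eq_indicator (l j : ℕ) :
    treeWavelet f cells l j = (cells l j).indicator fun _ => waveletCoeff f cells l j := by
  cases l <;> rfl

theorem tsum_waveletNormP_rpow (hτ : 0 ≤ τ) :
    ∑' q, waveletNormP p f cells q ^ τ = sparsityTau τ p f cells := by
  rw [sparsityTau, ENNReal.tsum_prod']
  refine tsum_congr fun l => tsum_congr fun j => ?_
  rw [waveletNormP, ENNReal.mul_rpow_of_nonneg _ _ hτ, ← ENNReal.rpow_mul, one_div_mul_eq_div]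

theorem waveletNormP_le_of_le_add_one {e : ℕ ≃ ℕ × ℕ}
    (horder : ∀ k k', k ≤ k' → waveletNormP p f cells (e k') ≤ waveletNormP p f cells (e k))
    (hτ : 0 < τ) {m k : ℕ} (hm : 0 < m) (hmk : m ≤ k + 1) :
    waveletNormP p f cells (e k) ≤ sparsityTau τ p f cells ^ (1 / τ) * (m : ℝ≥0∞) ^ (-(1 / τ)) := by
  set w := waveletNormP p f cells (e k)
  have hmass : (m : ℝ≥0∞) * w ^ τ ≤ sparsityTau τ p f cells :=
    calc (m : ℝ≥0∞) * w ^ τ ≤ (k + 1 : ℝ≥0∞) * w ^ τ := by gcongr; exact_mod_cast hmk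
      _ ≤ ∑' i, waveletNormP p f cells (e i) ^ τ :=
        add_one_mul_le_tsum_of_antitone
          ((ENNReal.monotone_rpow_of_nonneg hτ.le).comp_antitone fun _ _ h => horder _ _ h) k
      _ = sparsityTau τ p f cells := by
        rw [e.tsum_eq fun q => waveletNormP p f cells q ^ τ, tsum_waveletNormP_rpow hτ.le]
  have hw : w ^ τ ≤ sparsityTau τ p f cells * (m : ℝ≥0∞)⁻¹ := by
    rw [← div_eq_mul_inv, ENNReal.le_div_iff_mul_le (.inl (by positivity))
      (.inl (ENNReal.natCast_ne_top m)), mul_comm]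
    exact hmass
  calc w = (w ^ τ) ^ (1 / τ) := by
        rw [← ENNReal.rpow_mul, mul_one_div_cancel hτ.ne', ENNReal.rpow_one]
    _ ≤ (sparsityTau τ p f cells * (m : ℝ≥0∞)⁻¹) ^ (1 / τ) := by gcongr
    _ = sparsityTau τ p f cells ^ (1 / τ) * (m : ℝ≥0∞) ^ (-(1 / τ)) := by
        rw [ENNReal.mul_rpow_of_nonneg _ _ (by positivity), ENNReal.inv_rpow, ENNReal.rpow_neg]

theorem eLpNorm_sum_Ico_treeWavelet_le {ρ : ℝ≥0∞} {α : ℝ} (hT : IsBinaryPartitionTree cells)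
    (hmeas : ∀ l j, MeasurableSet (cells l j)) (hfin : ∀ l j, volume (cells l j) ≠ ∞)
    (hdecay : ∀ l j, volume (cells (l + 1) j) ≤ ρ * volume (cells l (j / 2))) (hp : 0 < p)
    (hτ0 : 0 < τ) (hτ : 1 / τ = α + 1 / p) {e : ℕ ≃ ℕ × ℕ}
    (horder : ∀ k k', k ≤ k' → waveletNormP p f cells (e k') ≤ waveletNormP p f cells (e k))
    {m : ℕ} (hm : 0 < m) :
    eLpNorm (∑ k ∈ Ico m (2 * m), treeWavelet f cells ((e k).1 + 1) (e k).2)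
        (ENNReal.ofReal p) volume ≤
      (1 - ρ ^ (1 / p))⁻¹ * sparsityTau τ p f cells ^ (1 / τ) * (m : ℝ≥0∞) ^ (-α) := by
  classical
  set ν : ℕ → ℕ × ℕ := fun k => ((e k).1 + 1, (e k).2)
  have hν : Function.Injective ν := fun a b hab => by
    simp only [ν, Prod.mk.injEq, Nat.add_right_cancel_iff] at hab
    exact e.injective (Prod.ext hab.1 hab.2)
  set Λ := (Ico m (2 * m)).image ν
  have hcard : #Λ = m := by
    rw [card_image_of_injective _ hν, Nat.card_Ico]
    omega
  have hε : ∀ q ∈ Λ, ‖waveletCoeff f cells q.1 q.2‖ₑ * volume (cells q.1 q.2) ^ (1 / p) ≤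
      sparsityTau τ p f cells ^ (1 / τ) * (m : ℝ≥0∞) ^ (-(1 / τ)) := by
    simp only [Λ, mem_image, mem_Ico]
    rintro _ ⟨k, ⟨hmk, -⟩, rfl⟩
    exact waveletNormP_le_of_le_add_one horder hτ0 hm (by omega)
  have hsum : ∑ k ∈ Ico m (2 * m), treeWavelet f cells ((e k).1 + 1) (e k).2 =
      fun x => ∑ q ∈ Λ, (cells q.1 q.2).indicator (fun _ => waveletCoeff f cells q.1 q.2) x := by
    funext x
    rw [Finset.sum_apply, sum_image hν.injOn]
    simp only [ν, treeWavelet_eq_indicator]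
  have hm0 : (m : ℝ≥0∞) ≠ 0 := by exact_mod_cast hm.ne'
  rw [hsum]
  refine (eLpNorm_sum_indicator_le hT hmeas hfin hdecay hp hε).trans_eq ?_
  rw [hcard, mul_comm, mul_assoc, mul_assoc, ← ENNReal.rpow_add _ _ hm0 (ENNReal.natCast_ne_top m),
    show -(1 / τ) + 1 / p = -α by linarith, mul_assoc]

theorem hasSum_treeWavelet_comp_equiv (hT : IsBinaryPartitionTree cells) {x : Fin n → ℝ}
    (hx : HasSum (fun q : ℕ × ℕ => treeWavelet f cells q.1 q.2 x) (f x)) (e : ℕ ≃ ℕ × ℕ) :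
    HasSum (fun k => treeWavelet f cells ((e k).1 + 1) (e k).2 x)
      (f x - treeWavelet f cells 0 0 x) :=
  e.hasSum_iff.2 <| hx.comp_succ_fst fun j hj => by
    simp [treeWavelet_eq_indicator, hT.eq_empty_of_ne_zero j hj]

theorem eLpNorm_sub_sum_treeWavelet_le {ρ : ℝ≥0∞} {α : ℝ} (hT : IsBinaryPartitionTree cells)
    (hmeas : ∀ l j, MeasurableSet (cells l j)) (hvol : volume (cells 0 0) ≠ ∞)
    (hdecay : ∀ l j, volume (cells (l + 1) j) ≤ ρ * volume (cells l (j / 2))) (hp : 1 ≤ p)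
    (hτ0 : 0 < τ) (hτ : 1 / τ = α + 1 / p) {e : ℕ ≃ ℕ × ℕ}
    (hsum : ∀ x ∈ cells 0 0, HasSum (fun q : ℕ × ℕ => treeWavelet f cells q.1 q.2 x) (f x))
    (horder : ∀ k k', k ≤ k' → waveletNormP p f cells (e k') ≤ waveletNormP p f cells (e k))
    {M : ℕ} (hM : 0 < M) :
    eLpNorm (fun x => f x - (treeWavelet f cells 0 0 x +
        ∑ k ∈ range M, treeWavelet f cells ((e k).1 + 1) (e k).2 x))
        (ENNReal.ofReal p) (volume.restrict (cells 0 0)) ≤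
      (1 - ρ ^ (1 / p))⁻¹ * (1 - 2 ^ (-α))⁻¹ * (M : ℝ≥0∞) ^ (-α) *
        sparsityTau τ p f cells ^ (1 / τ) := by
  have hfin : ∀ l j, volume (cells l j) ≠ ∞ := fun l j =>
    ne_top_of_le_ne_top hvol (measure_mono (hT.subset_root l j))
  set B := (1 - ρ ^ (1 / p))⁻¹ * sparsityTau τ p f cells ^ (1 / τ) * (M : ℝ≥0∞) ^ (-α)
  have hM0 : (M : ℝ≥0∞) ≠ 0 := by exact_mod_cast hM.ne'
  have hblock : ∀ s, eLpNorm (∑ k ∈ Ico (M * 2 ^ s) (M * 2 ^ (s + 1)),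
      treeWavelet f cells ((e k).1 + 1) (e k).2) (ENNReal.ofReal p)
        (volume.restrict (cells 0 0)) ≤ B * (2 ^ (-α)) ^ s := by
    intro s
    rw [pow_succ, ← mul_assoc, mul_comm _ 2]
    refine (eLpNorm_mono_measure _ Measure.restrict_le_self).trans
      ((eLpNorm_sum_Ico_treeWavelet_le hT hmeas hfin hdecay (by linarith) hτ0 hτ horder
        (by positivity)).trans_eq ?_)
    rw [Nat.cast_mul, Nat.cast_pow, ENNReal.mul_rpow_of_ne_zero hM0 (by simp),
      ← ENNReal.rpow_natCast_mul, mul_comm (s : ℝ), ENNReal.rpow_mul_natCast, Nat.cast_ofNat]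
    ring
  calc _ = eLpNorm ((f - treeWavelet f cells 0 0) -
        ∑ k ∈ range M, treeWavelet f cells ((e k).1 + 1) (e k).2) (ENNReal.ofReal p)
          (volume.restrict (cells 0 0)) := by
        congr 1
        funext x
        simp [sub_add_eq_sub_sub]
    _ ≤ ∑' s, B * (2 ^ (-α)) ^ s := by
        refine (eLpNorm_sub_sum_range_le_tsum (fun k => ?_) (by simpa using hp)
          ((ae_restrict_mem (hmeas 0 0)).mono fun x hx =>
            hasSum_treeWavelet_comp_equiv hT (hsum x hx) e) hM).trans
          (ENNReal.tsum_le_tsum hblock)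
        rw [treeWavelet_eq_indicator]
        exact (stronglyMeasurable_const.indicator (hmeas _ _)).aestronglyMeasurable
    _ = _ := by
        rw [ENNReal.tsum_mul_left, ENNReal.tsum_geometric]
        ring

end Wavelet

theorem stmt_11_general (ρ p α τ : ℝ) (hρ1 : ρ < 1) (hp : 1 ≤ p) (hα : 0 < α)
    (hτ0 : 0 < τ) (hτ : 1 / τ = α + 1 / p) :
    ∃ C : ℝ, 0 < C ∧
      ∀ (n d : ℕ) (cells : ℕ → ℕ → Set (Fin n → ℝ))
        (f : (Fin n → ℝ) → EuclideanSpace ℝ (Fin d)) (e : ℕ ≃ ℕ × ℕ) (M : ℕ),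
        (∀ l j, MeasurableSet (cells l j)) →
        (∀ j, j ≠ 0 → cells 0 j = ∅) →
        (∀ l j, cells (l + 1) (2 * j) ∪ cells (l + 1) (2 * j + 1) = cells l j) →
        (∀ l j, Disjoint (cells (l + 1) (2 * j)) (cells (l + 1) (2 * j + 1))) →
        (∀ l j, volume (cells (l + 1) j) ≤ ENNReal.ofReal ρ * volume (cells l (j / 2))) →
        volume (cells 0 0) < ⊤ →
        IntegrableOn f (cells 0 0) →
        (∀ x ∈ cells 0 0,
          HasSum (fun q : ℕ × ℕ => treeWavelet f cells q.1 q.2 x) (f x)) →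
        (∀ k k', k ≤ k' → waveletNormP p f cells (e k') ≤ waveletNormP p f cells (e k)) →
        sparsityTau τ p f cells < ⊤ →
        1 ≤ M →
        eLpNorm
            (fun x => f x - (treeWavelet f cells 0 0 x +
              ∑ k ∈ Finset.range M, treeWavelet f cells ((e k).1 + 1) (e k).2 x))
            (ENNReal.ofReal p) (volume.restrict (cells 0 0))
          ≤ ENNReal.ofReal (C * (M : ℝ) ^ (-α)) * sparsityTau τ p f cells ^ (1 / τ) := by
  have hp0 : 0 < p := by linarith
  set K : ℝ≥0∞ := (1 - ENNReal.ofReal ρ ^ (1 / p))⁻¹ * (1 - 2 ^ (-α))⁻¹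
  have hK : K ≠ ∞ := by
    refine ENNReal.mul_ne_top (ENNReal.inv_ne_top.2 (tsub_pos_iff_lt.2 ?_).ne')
      (ENNReal.inv_ne_top.2 (tsub_pos_iff_lt.2 ?_).ne')
    · exact ENNReal.rpow_lt_one (ENNReal.ofReal_lt_one.2 hρ1) (by positivity)
    · exact ENNReal.rpow_lt_one_of_one_lt_of_neg ENNReal.one_lt_two (by linarith)
  refine ⟨K.toReal, ENNReal.toReal_pos (by simp [K]) hK, ?_⟩
  intro n d cells f e M hmeas h0 hunion hdisj hdecay hvol _ hsum horder _ hM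
  refine (eLpNorm_sub_sum_treeWavelet_le ⟨h0, hunion, hdisj⟩ hmeas hvol.ne hdecay hp hτ0 hτ hsum
    horder hM).trans_eq ?_
  rw [ENNReal.ofReal_mul ENNReal.toReal_nonneg, ENNReal.ofReal_toReal hK,
    ← ENNReal.ofReal_rpow_of_pos (by exact_mod_cast hM), ENNReal.ofReal_natCast]

/-- Jackson estimate for a single tree, `r = 1`: if the tree satisfies the geometric decay
condition with parameter `ρ`, `f = Σ_{Ω∈𝒯} ψ_Ω`, `N_τ(f,𝒯) < ∞` with `1/τ = α + 1/p`, and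
`f_M` keeps (besides the root term) the `M` wavelets of largest `L_p` norm (enumerated by a
bijection `e` with non-increasing norms), then `‖f - f_M‖_p ≤ C(p,α,ρ) M^{-α} N_τ(f,𝒯)`,
with `C` independent of the dimension `n`. -/
theorem stmt_11 (ρ p α τ : ℝ) (hρ0 : 0 < ρ) (hρ1 : ρ < 1) (hp : 1 ≤ p) (hα : 0 < α)
    (hτ0 : 0 < τ) (hτ : 1 / τ = α + 1 / p) :
    ∃ C : ℝ, 0 < C ∧
      ∀ (n d : ℕ) (cells : ℕ → ℕ → Set (Fin n → ℝ))
        (f : (Fin n → ℝ) → EuclideanSpace ℝ (Fin d)) (e : ℕ ≃ ℕ × ℕ) (M : ℕ),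
        (∀ l j, MeasurableSet (cells l j)) →
        (∀ j, j ≠ 0 → cells 0 j = ∅) →
        (∀ l j, cells (l + 1) (2 * j) ∪ cells (l + 1) (2 * j + 1) = cells l j) →
        (∀ l j, Disjoint (cells (l + 1) (2 * j)) (cells (l + 1) (2 * j + 1))) →
        (∀ l j, volume (cells (l + 1) j) ≤ ENNReal.ofReal ρ * volume (cells l (j / 2))) →
        volume (cells 0 0) < ⊤ →
        IntegrableOn f (cells 0 0) →
        (∀ x ∈ cells 0 0,
          HasSum (fun q : ℕ × ℕ => treeWavelet f cells q.1 q.2 x) (f x)) →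
        (∀ k k', k ≤ k' → waveletNormP p f cells (e k') ≤ waveletNormP p f cells (e k)) →
        sparsityTau τ p f cells < ⊤ →
        1 ≤ M →
        eLpNorm
            (fun x => f x - (treeWavelet f cells 0 0 x +
              ∑ k ∈ Finset.range M, treeWavelet f cells ((e k).1 + 1) (e k).2 x))
            (ENNReal.ofReal p) (volume.restrict (cells 0 0))
          ≤ ENNReal.ofReal (C * (M : ℝ) ^ (-α)) * sparsityTau τ p f cells ^ (1 / τ) :=
  stmt_11_general ρ p α τ hρ1 hp hα hτ0 hτ
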